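/- arXiv:2604.27466 — 3 statements merged into one kernel-verified Lean document; each statement's English description precedes it below -/
import Mathlib

section
/- Let ≡₁, ≡₂ be partial equivalence relations on ℕ and G, G' two functional relations from ≡₁ to ≡₂. If f_G = f_{G'} as maps on ideals of ≡₁, then G = G' (the assignment G ↦ f_G is injective, i.e., the functor is faithful). -/
/-- `I` is an ideal of the transitive relation `r` on `ℕ`:
nonempty, lower, and directed. -/
def IsIdeal (r : ℕ → ℕ → Prop) (I : Set ℕ) : Prop :=
  I.Nonempty ∧ (∀ a ∈ I, ∀ b, r b a → b ∈ I) ∧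
    ∀ a ∈ I, ∀ b ∈ I, ∃ c ∈ I, r a c ∧ r b c

/-- `G` is a functional relation from the PER `e1` to the PER `e2`. -/
def FunRel (e1 e2 : ℕ → ℕ → Prop) (G : ℕ → ℕ → Prop) : Prop :=
  (∀ a b, G a b → e1 a a ∧ e2 b b) ∧
  (∀ a a' b, G a b → e1 a a' → G a' b) ∧
  (∀ a b b', G a b → e2 b b' → G a b') ∧
  (∀ a b b', G a b → G a b' → e2 b b') ∧
  (∀ a, e1 a a → ∃ b, G a b)

/-- The map induced on ideals by a functional relation `G`. -/
def fG (G : ℕ → ℕ → Prop) (I : Set ℕ) : Set ℕ := {b | ∃ a ∈ I, G a b}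

theorem stmt_9 (e1 e2 : ℕ → ℕ → Prop)
    (h1 : Symmetric e1) (h1' : Transitive e1) (h2 : Symmetric e2) (h2' : Transitive e2)
    (G G' : ℕ → ℕ → Prop) (hG : FunRel e1 e2 G) (hG' : FunRel e1 e2 G')
    (hf : ∀ I : Set ℕ, IsIdeal e1 I → fG G I = fG G' I) :
    G = G' := by
  have key : ∀ (H H' : ℕ → ℕ → Prop), FunRel e1 e2 H → FunRel e1 e2 H' →
      (∀ I : Set ℕ, IsIdeal e1 I → fG H I = fG H' I) → ∀ a b, H a b → H' a b := by
    intro H H' hH hH' hfe a b hab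
    have haa : e1 a a := (hH.1 a b hab).1
    set I : Set ℕ := {x | e1 x a} with hI
    have hideal : IsIdeal e1 I := by
      refine ⟨⟨a, haa⟩, ?_, ?_⟩
      · intro x hx y hy; exact h1' hy hx
      · intro x hx y hy; exact ⟨a, haa, hx, hy⟩
    have hb : b ∈ fG H I := ⟨a, haa, hab⟩
    rw [hfe I hideal] at hb
    obtain ⟨a', ha', hab'⟩ := hb
    exact hH'.2.1 a' a b hab' ha'
  funext a b
  exact propext ⟨key G G' hG hG' hf a b,
    key G' G hG' hG (fun I hI => (hf I hI).symm) a b⟩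
end

section
/- Let ≺ be a transitive relation on ℕ, and suppose there is a set D ⊆ ℕ × ℕ such that for all ideals I, J of ≺: I = J if and only if there exists (a,b) ∈ D with a ∈ I and b ∈ J, and such that (a,b) ∈ D implies [a]_≺ ≠ ∅ and [b]_≺ ≠ ∅. Define S = {c | [c]_≺ ≠ ∅ ∧ ∃(a,b) ∈ D, a ≺ c ∧ b ≺ c} and a ≡ b ⟺ a,b ∈ S ∧ ∃ c ∈ S (a ≺ c ∧ b ≺ c). Then ≡ is a partial equivalence relation on ℕ. -/
theorem stmt_12 (prec : ℕ → ℕ → Prop) (htrans : Transitive prec)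
    (D : Set (ℕ × ℕ))
    (hD : ∀ I J : Set ℕ, IsIdeal prec I → IsIdeal prec J →
      (I = J ↔ ∃ ab ∈ D, ab.1 ∈ I ∧ ab.2 ∈ J))
    (hDne : ∀ ab ∈ D, (∃ I, IsIdeal prec I ∧ ab.1 ∈ I) ∧ ∃ I, IsIdeal prec I ∧ ab.2 ∈ I) :
    Symmetric (fun a b =>
        a ∈ {c | (∃ I, IsIdeal prec I ∧ c ∈ I) ∧ ∃ ab ∈ D, prec ab.1 c ∧ prec ab.2 c} ∧
        b ∈ {c | (∃ I, IsIdeal prec I ∧ c ∈ I) ∧ ∃ ab ∈ D, prec ab.1 c ∧ prec ab.2 c} ∧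
        ∃ c ∈ {c | (∃ I, IsIdeal prec I ∧ c ∈ I) ∧ ∃ ab ∈ D, prec ab.1 c ∧ prec ab.2 c},
          prec a c ∧ prec b c) ∧
    Transitive (fun a b =>
        a ∈ {c | (∃ I, IsIdeal prec I ∧ c ∈ I) ∧ ∃ ab ∈ D, prec ab.1 c ∧ prec ab.2 c} ∧
        b ∈ {c | (∃ I, IsIdeal prec I ∧ c ∈ I) ∧ ∃ ab ∈ D, prec ab.1 c ∧ prec ab.2 c} ∧
        ∃ c ∈ {c | (∃ I, IsIdeal prec I ∧ c ∈ I) ∧ ∃ ab ∈ D, prec ab.1 c ∧ prec ab.2 c},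
          prec a c ∧ prec b c) := by
  constructor
  · rintro a b ⟨ha, hb, c, hc, hac, hbc⟩
    exact ⟨hb, ha, c, hc, hbc, hac⟩
  · rintro a b e ⟨ha, hb, c, ⟨⟨I, hI, hcI⟩, hcD⟩, hac, hbc⟩
      ⟨-, he, d, ⟨⟨J, hJ, hdJ⟩, hdD⟩, hbd, hed⟩
    -- b is in both I and J
    have hbI : b ∈ I := hI.2.1 c hcI b hbc
    have hbJ : b ∈ J := hJ.2.1 d hdJ b hbd
    -- b ∈ S: it has a D-pair below it
    obtain ⟨hbS1, ab, habD, hab1, hab2⟩ := hb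
    have hIJ : I = J := (hD I J hI hJ).2 ⟨ab, habD, hI.2.1 b hbI _ hab1, hJ.2.1 b hbJ _ hab2⟩
    subst hIJ
    obtain ⟨f, hfI, hcf, hdf⟩ := hI.2.2 c hcI d hdJ
    obtain ⟨pq, hpqD, hpq1, hpq2⟩ := hcD
    have hfS : f ∈ {c | (∃ I, IsIdeal prec I ∧ c ∈ I) ∧
        ∃ ab ∈ D, prec ab.1 c ∧ prec ab.2 c} :=
      ⟨⟨I, hI, hfI⟩, pq, hpqD, htrans hpq1 hcf, htrans hpq2 hcf⟩
    exact ⟨ha, he, f, hfS, htrans hac hcf, htrans hed hdf⟩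
end

section
/- Let ≺ be a transitive relation on ℕ with a discreteness witness D as above, c ∈ S (where S = {c | [c]_≺ ≠ ∅ ∧ ∃(a,b) ∈ D, a ≺ c ∧ b ≺ c}). Then there is a unique ideal I of ≺ with c ∈ I, i.e., [c]_≺ is a singleton. -/
theorem stmt_14 (prec : ℕ → ℕ → Prop) (htrans : Transitive prec)
    (D : Set (ℕ × ℕ))
    (hD : ∀ I J : Set ℕ, IsIdeal prec I → IsIdeal prec J →
      (I = J ↔ ∃ ab ∈ D, ab.1 ∈ I ∧ ab.2 ∈ J))
    (hDne : ∀ ab ∈ D, (∃ I, IsIdeal prec I ∧ ab.1 ∈ I) ∧ ∃ I, IsIdeal prec I ∧ ab.2 ∈ I)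
    (c : ℕ)
    (hc : (∃ I, IsIdeal prec I ∧ c ∈ I) ∧ ∃ ab ∈ D, prec ab.1 c ∧ prec ab.2 c) :
    ∃! I : Set ℕ, IsIdeal prec I ∧ c ∈ I := by
  obtain ⟨⟨I, hI, hcI⟩, ab, habD, ha, hb⟩ := hc
  refine ⟨I, ⟨hI, hcI⟩, ?_⟩
  rintro J ⟨hJ, hcJ⟩
  exact ((hD J I hJ hI).2 ⟨ab, habD, hJ.2.1 c hcJ _ ha, hI.2.1 c hcI _ hb⟩)
end
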